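/- For every n ≥ 1, the word of values T(L_{2n+1}+1), T(L_{2n+1}+2), …, T(L_{2n+2}−1) (i.e. T(Λ_{2n+1})) equals the letter-by-letter image under λ of the word τ^n(3), where τ^n(3) denotes the n-fold application of the morphism τ to the one-letter word 3. -/
import Mathlib


/-- The golden mean φ = (1+√5)/2. -/
noncomputable def phi : ℝ := (1 + Real.sqrt 5) / 2

/-- `d : ℤ → ℕ` is a base-phi expansion of `N`: finitely supported, digits at most 1,
no two consecutive digits equal 1, and `∑ d i * φ^i = N`. -/
def IsBasePhi (N : ℕ) (d : ℤ → ℕ) : Prop :=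
  {i : ℤ | d i ≠ 0}.Finite ∧ (∀ i, d i ≤ 1) ∧ (∀ i, d i * d (i + 1) = 0) ∧
    ∑' i : ℤ, (d i : ℝ) * phi ^ i = (N : ℝ)

/-- The Lucas numbers: L 0 = 2, L 1 = 1, L (n+2) = L (n+1) + L n. -/
def Lucas : ℕ → ℕ
  | 0 => 2
  | 1 => 1
  | n + 2 => Lucas (n + 1) + Lucas n

/-- The sum of the digits of a (finitely supported) digit function. -/
noncomputable def digitSum (d : ℤ → ℕ) : ℕ := ∑' i : ℤ, d i

/-- The word `T(K) T(K+1) … T(M)` of values of `T` on the interval `[a, b]`. -/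
def Tword (T : ℕ → ℕ) (a b : ℕ) : List ℕ := (List.range (b + 1 - a)).map fun j => T (a + j)

/-- The morphism τ on the alphabet {1,…,8}. -/
def tau : ℕ → List ℕ
  | 1 => [1, 2]
  | 2 => [3, 1, 2]
  | 3 => [4, 7]
  | 4 => [8, 3, 1, 2]
  | 5 => [5, 6]
  | 6 => [7, 5, 6]
  | 7 => [8, 3]
  | 8 => [4, 7, 5, 6]
  | _ => []

/-- τ applied to a word, letter by letter. -/
def tauWord (w : List ℕ) : List ℕ := w.flatMap tau

/-- The letter-to-letter map λ with λ(1)=λ(3)=λ(6)=λ(8)=0 and λ(2)=λ(4)=λ(5)=λ(7)=1. -/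
def lam : ℕ → ℕ
  | 2 => 1
  | 4 => 1
  | 5 => 1
  | 7 => 1
  | _ => 0

lemma phi_pos : 0 < phi := by
  have h5 : (0:ℝ) ≤ Real.sqrt 5 := Real.sqrt_nonneg 5
  unfold phi; linarith
lemma phi_ne : phi ≠ 0 := ne_of_gt phi_pos
lemma phi_sq : phi ^ 2 = phi + 1 := by
  have h5 : Real.sqrt 5 ^ 2 = 5 := Real.sq_sqrt (by norm_num)
  unfold phi; nlinarith [h5]
lemma hrec (k : ℤ) : phi ^ (k + 2) = phi ^ (k + 1) + phi ^ k := by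
  have h1 : phi ^ (k + 2) = phi ^ k * phi ^ (2:ℕ) := by
    rw [← zpow_natCast phi 2, ← zpow_add₀ phi_ne]; ring_nf
  have h2 : phi ^ (k + 1) = phi ^ k * phi := by
    rw [zpow_add_one₀ phi_ne]
  rw [h1, h2, phi_sq]; ring
lemma pzc {a b : ℤ} (h : a = b) : phi ^ a = phi ^ b := by rw [h]
lemma lucas_rec (m : ℕ) : Lucas (m + 2) = Lucas (m + 1) + Lucas m := rfl
lemma lucas_pos : ∀ n, 1 ≤ Lucas n
  | 0 => by norm_num [Lucas]
  | 1 => le_refl 1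
  | n+2 => by rw [lucas_rec]; have := lucas_pos (n+1); omega

lemma lucas_even_odd : ∀ k : ℕ, ((Lucas (2*k) : ℝ) = phi ^ (2*(k:ℤ)) + phi ^ (-(2*(k:ℤ)))) ∧
    ((Lucas (2*k+1) : ℝ) = phi ^ (2*(k:ℤ)+1) - phi ^ (-(2*(k:ℤ))-1))
  | 0 => by
      constructor
      · norm_num [Lucas]
      · have h := hrec (-1)
        norm_num [Lucas] at h ⊢
        linarith
  | k+1 => by
      obtain ⟨he, ho⟩ := lucas_even_odd k
      have e1 : 2*(k+1) = (2*k) + 2 := by ring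
      have e2 : 2*(k+1)+1 = (2*k+1) + 2 := by ring
      have h1 := hrec (2*(k:ℤ))
      have h2 := hrec (-(2*(k:ℤ))-2)
      rw [pzc (show (-(2*(k:ℤ))-2) + 2 = -(2*(k:ℤ)) by ring),
          pzc (show (-(2*(k:ℤ))-2) + 1 = -(2*(k:ℤ))-1 by ring)] at h2
      have he' : (Lucas (2*k+2) : ℝ) = phi ^ (2*(k:ℤ)+2) + phi ^ (-(2*(k:ℤ))-2) := by
        rw [lucas_rec]; push_cast [he, ho]; linarith
      constructor
      · rw [e1, he']
        push_cast
        rw [pzc (show (2*((k:ℤ)+1)) = 2*(k:ℤ)+2 by ring),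
          pzc (show (-(2*((k:ℤ)+1))) = -(2*(k:ℤ))-2 by ring)]
      · rw [e2, lucas_rec, show 2*k+1+1 = 2*k+2 from rfl]
        have h3 := hrec (2*(k:ℤ)+1)
        rw [pzc (show (2*(k:ℤ)+1+1) = 2*(k:ℤ)+2 by ring)] at h3
        have h4 := hrec (-(2*(k:ℤ))-3)
        rw [pzc (show (-(2*(k:ℤ))-3) + 2 = -(2*(k:ℤ))-1 by ring),
            pzc (show (-(2*(k:ℤ))-3) + 1 = -(2*(k:ℤ))-2 by ring)] at h4
        push_cast [he', ho]
        rw [pzc (show (2*((k:ℤ)+1)+1) = (2*(k:ℤ)+1)+2 by ring),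
            pzc (show (-(2*((k:ℤ)+1))-1) = -(2*(k:ℤ))-3 by ring)]
        linarith

lemma lucas_rec3 (m : ℕ) : Lucas (m+3) = Lucas (m+2) + Lucas (m+1) := lucas_rec (m+1)
lemma lucas_rec4 (m : ℕ) : Lucas (m+4) = Lucas (m+3) + Lucas (m+2) := lucas_rec (m+2)

def midlen (n : ℕ) : ℕ := Lucas (2*n+2) + 1 - 2 * Lucas (2*n)

mutual
def UU : ℕ → List (Finset ℤ)
  | 0 => [∅, {0}]
  | n+1 => UU n ++ WW n ++ (UU n).map (fun s => insert (2*(n:ℤ)+2) (insert (-(2*(n:ℤ))-2) s))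
def WW : ℕ → List (Finset ℤ)
  | 0 => [({1,-2} : Finset ℤ)]
  | n+1 => (WW n).map (fun s => insert (2*(n:ℤ)+3) (insert (-(2*(n:ℤ))-1) (insert (-(2*(n:ℤ))-4) ((s.erase (2*(n:ℤ)+1)).erase (-(2*(n:ℤ))-2)))))
      ++ ((UU n).take (midlen n)).map (fun s => insert (2*(n:ℤ)+3) (insert (2*(n:ℤ)) (insert (-(2*(n:ℤ))-1) (insert (-(2*(n:ℤ))-4) s))))
      ++ (WW n).map (fun s => insert (2*(n:ℤ)+3) (insert (-(2*(n:ℤ))-4) (s.erase (-(2*(n:ℤ))-2))))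
end

def NoAdj (s : Finset ℤ) : Prop := ∀ i ∈ s, i + 1 ∉ s
def SumsTo (s : Finset ℤ) (N : ℕ) : Prop := (∑ i ∈ s, phi ^ i) = (N:ℝ)

lemma NoAdj_subset {s t : Finset ℤ} (h : t ⊆ s) (hs : NoAdj s) : NoAdj t :=
  fun i hi hc => hs i (h hi) (h hc)

def Master (n : ℕ) : Prop :=
  (UU n).length = Lucas (2*n+1) + 1 ∧
  (WW n).length = Lucas (2*n) - 1 ∧
  (∀ j, (h : j < (UU n).length) → NoAdj ((UU n)[j]) ∧ SumsTo ((UU n)[j]) j ∧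
      ∀ m : ℕ, j ≤ Lucas (2*m+1) → ((UU n)[j]) ⊆ Finset.Icc (-(2*(m:ℤ))) (2*(m:ℤ))) ∧
  (∀ j, (h : j < (WW n).length) → NoAdj ((WW n)[j]) ∧ SumsTo ((WW n)[j]) (Lucas (2*n+1) + 1 + j) ∧
      ((WW n)[j]) ⊆ insert (2*(n:ℤ)+1) (insert (-(2*(n:ℤ))-2) (Finset.Icc (-(2*(n:ℤ))+1) (2*(n:ℤ)-1))) ∧
      (2*(n:ℤ)+1) ∈ ((WW n)[j]) ∧ (-(2*(n:ℤ))-2) ∈ ((WW n)[j]))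

lemma master_zero : Master 0 := by
  refine ⟨by simp [UU, Lucas], by simp [WW, Lucas], ?_, ?_⟩
  · intro j h
    simp only [UU, List.length_cons, List.length_nil] at h
    interval_cases j
    · refine ⟨?_, ?_, ?_⟩
      · intro i hi; simp [UU] at hi
      · simp [SumsTo, UU]
      · intro m _; intro i hi; simp [UU] at hi
    · refine ⟨?_, ?_, ?_⟩
      · intro i hi; simp [UU] at hi; subst hi; simp [UU]
      · simp [SumsTo, UU]
      · intro m _; intro i hi; simp [UU] at hi; subst hi
        simp only [Finset.mem_Icc]; omega
  · intro j h
    simp only [WW, List.length_cons, List.length_nil] at h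
    interval_cases j
    refine ⟨?_, ?_, ?_, ?_, ?_⟩
    · intro i hi hc
      simp [WW, Finset.mem_insert] at hi hc
      omega
    · show (∑ i ∈ ({1,-2} : Finset ℤ), phi ^ i) = ((Lucas 1 + 1 + 0 : ℕ) : ℝ)
      rw [Finset.sum_insert (by decide), Finset.sum_singleton]
      have h1 := hrec (-1)
      have h2 := hrec (-2)
      rw [pzc (show (-1:ℤ)+2 = 1 by ring), pzc (show (-1:ℤ)+1 = 0 by ring)] at h1
      rw [pzc (show (-2:ℤ)+2 = 0 by ring), pzc (show (-2:ℤ)+1 = -1 by ring)] at h2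
      have h0 : phi ^ (0:ℤ) = 1 := zpow_zero phi
      show phi ^ (1:ℤ) + phi ^ (-2:ℤ) = ((2:ℕ):ℝ)
      push_cast
      linear_combination h1 - h2 + 2*h0
    · intro i hi; simp [WW, Finset.mem_insert, Finset.mem_Icc] at hi ⊢; omega
    · simp [WW]
    · simp [WW]

lemma lucas_step (m : ℕ) : Lucas (m+1) ≤ Lucas (m+2) := by
  rw [lucas_rec]; have := lucas_pos m; omega
lemma lucas_mono : ∀ {a b : ℕ}, 1 ≤ a → a ≤ b → Lucas a ≤ Lucas b := by
  intro a b h1 hab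
  induction b with
  | zero => omega
  | succ b ih =>
    rcases Nat.lt_or_ge a (b+1) with h | h
    · have hb : 1 ≤ b := by omega
      have h2 : Lucas b ≤ Lucas (b+1) := by
        have := lucas_step (b-1)
        rw [show b-1+1 = b by omega, show b-1+2 = b+1 by omega] at this
        exact this
      exact le_trans (ih (by omega)) h2
    · have : a = b+1 := by omega
      subst this; exact le_refl _

lemma ga1 {α} (A B C : List α) {j : ℕ} (h : j < (A++B++C).length) (h1 : j < A.length) :
    (A++B++C)[j] = A[j] := by
  rw [List.getElem_append_left (by simp; omega), List.getElem_append_left h1]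
lemma ga2 {α} (A B C : List α) {j : ℕ} (h : j < (A++B++C).length) (h1 : A.length ≤ j)
    (h2 : j < A.length + B.length) :
    (A++B++C)[j] = B[j - A.length]'(by omega) := by
  rw [List.getElem_append_left (by simp; omega), List.getElem_append_right h1]
lemma ga3 {α} (A B C : List α) {j : ℕ} (h : j < (A++B++C).length) (h1 : A.length + B.length ≤ j) :
    (A++B++C)[j] = C[j - A.length - B.length]'(by simp at h; omega) := by
  rw [List.getElem_append_right (by simp; omega)]
  congr 1
  simp; omega

lemma master : ∀ n, Master n := by
  intro n
  induction n with
  | zero => exact master_zero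
  | succ n IH =>
    obtain ⟨lU, lW, hU, hW⟩ := IH
    have p0 := lucas_pos (2*n)
    have p1 := lucas_pos (2*n+1)
    have r2 : Lucas (2*n+2) = Lucas (2*n+1) + Lucas (2*n) := lucas_rec _
    have r3 : Lucas (2*n+3) = Lucas (2*n+2) + Lucas (2*n+1) := lucas_rec3 _
    have hmono : Lucas (2*n) ≤ Lucas (2*n+1) + 1 := by
      cases n with
      | zero => decide
      | succ k =>
        have := lucas_mono (a := 2*(k+1)) (b := 2*(k+1)+1) (by omega) (by omega)
        omega
    have hE : (Lucas (2*n) : ℝ) = phi ^ (2*(n:ℤ)) + phi ^ (-(2*(n:ℤ))) := (lucas_even_odd n).1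
    have hO : (Lucas (2*n+1) : ℝ) = phi ^ (2*(n:ℤ)+1) - phi ^ (-(2*(n:ℤ))-1) := (lucas_even_odd n).2
    have hE1 : (Lucas (2*n+2) : ℝ) = phi ^ (2*(n:ℤ)+2) + phi ^ (-(2*(n:ℤ))-2) := by
      have h := (lucas_even_odd (n+1)).1
      rw [show 2*(n+1) = 2*n+2 by ring] at h
      push_cast at h
      rw [pzc (show 2*((n:ℤ)+1) = 2*(n:ℤ)+2 by ring),
          pzc (show -(2*((n:ℤ)+1)) = -(2*(n:ℤ))-2 by ring)] at h
      push_cast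
      exact h
    have hO1 : (Lucas (2*n+3) : ℝ) = phi ^ (2*(n:ℤ)+3) - phi ^ (-(2*(n:ℤ))-3) := by
      have h := (lucas_even_odd (n+1)).2
      rw [show 2*(n+1)+1 = 2*n+3 by ring] at h
      push_cast at h
      rw [pzc (show 2*((n:ℤ)+1)+1 = 2*(n:ℤ)+3 by ring),
          pzc (show -(2*((n:ℤ)+1))-1 = -(2*(n:ℤ))-3 by ring)] at h
      push_cast
      exact h
    have z1 : phi ^ (2*(n:ℤ)+2) = phi ^ (2*(n:ℤ)+1) + phi ^ (2*(n:ℤ)) := hrec _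
    have z2 : phi ^ (2*(n:ℤ)+3) = phi ^ (2*(n:ℤ)+2) + phi ^ (2*(n:ℤ)+1) := by
      have h := hrec (2*(n:ℤ)+1)
      rw [pzc (show 2*(n:ℤ)+1+2 = 2*(n:ℤ)+3 by ring), pzc (show 2*(n:ℤ)+1+1 = 2*(n:ℤ)+2 by ring)] at h
      exact h
    have z3 : phi ^ (-(2*(n:ℤ))) = phi ^ (-(2*(n:ℤ))-1) + phi ^ (-(2*(n:ℤ))-2) := by
      have h := hrec (-(2*(n:ℤ))-2)
      rw [pzc (show -(2*(n:ℤ))-2+2 = -(2*(n:ℤ)) by ring), pzc (show -(2*(n:ℤ))-2+1 = -(2*(n:ℤ))-1 by ring)] at h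
      exact h
    have z4 : phi ^ (-(2*(n:ℤ))-1) = phi ^ (-(2*(n:ℤ))-2) + phi ^ (-(2*(n:ℤ))-3) := by
      have h := hrec (-(2*(n:ℤ))-3)
      rw [pzc (show -(2*(n:ℤ))-3+2 = -(2*(n:ℤ))-1 by ring), pzc (show -(2*(n:ℤ))-3+1 = -(2*(n:ℤ))-2 by ring)] at h
      exact h
    have z5 : phi ^ (-(2*(n:ℤ))-2) = phi ^ (-(2*(n:ℤ))-3) + phi ^ (-(2*(n:ℤ))-4) := by
      have h := hrec (-(2*(n:ℤ))-4)
      rw [pzc (show -(2*(n:ℤ))-4+2 = -(2*(n:ℤ))-2 by ring), pzc (show -(2*(n:ℤ))-4+1 = -(2*(n:ℤ))-3 by ring)] at h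
      exact h
    have hUdef : UU (n+1) = UU n ++ WW n ++ (UU n).map (fun s => insert (2*(n:ℤ)+2) (insert (-(2*(n:ℤ))-2) s)) := rfl
    have hWdef : WW (n+1) = (WW n).map (fun s => insert (2*(n:ℤ)+3) (insert (-(2*(n:ℤ))-1) (insert (-(2*(n:ℤ))-4) ((s.erase (2*(n:ℤ)+1)).erase (-(2*(n:ℤ))-2)))))
      ++ ((UU n).take (midlen n)).map (fun s => insert (2*(n:ℤ)+3) (insert (2*(n:ℤ)) (insert (-(2*(n:ℤ))-1) (insert (-(2*(n:ℤ))-4) s))))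
      ++ (WW n).map (fun s => insert (2*(n:ℤ)+3) (insert (-(2*(n:ℤ))-4) (s.erase (-(2*(n:ℤ))-2)))) := rfl
    have hml : midlen n ≤ (UU n).length := by
      simp only [midlen, lU]; omega
    have htake : ((UU n).take (midlen n)).length = midlen n := by
      rw [List.length_take]; omega
    have lU' : (UU (n+1)).length = Lucas (2*(n+1)+1) + 1 := by
      rw [show 2*(n+1)+1 = 2*n+3 by ring]
      simp only [hUdef, List.length_append, List.length_map, lU, lW]
      omega
    have lW' : (WW (n+1)).length = Lucas (2*(n+1)) - 1 := by
      rw [show 2*(n+1) = 2*n+2 by ring]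
      simp only [hWdef, List.length_append, List.length_map, List.length_take, lU, lW, midlen]
      omega
    refine ⟨lU', lW', ?_, ?_⟩
    · -- U part
      rw [hUdef]
      intro j h
      have h' : j < (UU n).length + ((WW n).length + (UU n).length) := by
        simpa using h
      rcases Nat.lt_or_ge j (UU n).length with h1 | h1
      · -- first block: entries of UU n, unchanged
        have he : (UU n ++ WW n ++ (UU n).map (fun s => insert (2*(n:ℤ)+2) (insert (-(2*(n:ℤ))-2) s)))[j] = (UU n)[j] := ga1 _ _ _ h h1
        rw [he]
        exact hU j h1
      · rcases Nat.lt_or_ge j ((UU n).length + (WW n).length) with h2 | h2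
        · -- second block: entries of WW n
          have he : (UU n ++ WW n ++ (UU n).map (fun s => insert (2*(n:ℤ)+2) (insert (-(2*(n:ℤ))-2) s)))[j] = (WW n)[j - (UU n).length]'(by omega) := ga2 _ _ _ h h1 h2
          rw [he]
          obtain ⟨hadj, hsum, hsub, hm1, hm2⟩ := hW (j - (UU n).length) (by omega)
          refine ⟨hadj, ?_, ?_⟩
          · have hj : j = Lucas (2*n+1) + 1 + (j - (UU n).length) := by omega
            rw [SumsTo]
            conv_rhs => rw [hj]
            exact hsum
          · intro m hm
            have hnm : n + 1 ≤ m := by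
              by_contra hc
              have : Lucas (2*m+1) ≤ Lucas (2*n+1) := lucas_mono (by omega) (by omega)
              rw [lU] at h1; omega
            intro i hi
            have := hsub hi
            simp only [Finset.mem_insert, Finset.mem_Icc] at this ⊢
            have : i = 2*(n:ℤ)+1 ∨ i = -(2*(n:ℤ))-2 ∨ (-(2*(n:ℤ))+1 ≤ i ∧ i ≤ 2*(n:ℤ)-1) := this
            have hc : (n:ℤ) + 1 ≤ (m:ℤ) := by exact_mod_cast hnm
            omega
        · -- third block: inserts into UU n entries
          have hkl : j - (UU n).length - (WW n).length < (UU n).length := by omega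
          have he : (UU n ++ WW n ++ (UU n).map (fun s => insert (2*(n:ℤ)+2) (insert (-(2*(n:ℤ))-2) s)))[j] = insert (2*(n:ℤ)+2) (insert (-(2*(n:ℤ))-2) ((UU n)[j - (UU n).length - (WW n).length]'hkl)) := by
            rw [ga3 _ _ _ h h2, List.getElem_map]
          rw [he]
          obtain ⟨hadj, hsum, hsub⟩ := hU (j - (UU n).length - (WW n).length) hkl
          have hbnd := hsub n (by omega)
          have hb : ∀ x ∈ (UU n)[j - (UU n).length - (WW n).length], -(2*(n:ℤ)) ≤ x ∧ x ≤ 2*(n:ℤ) := by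
            intro x hx
            have := hbnd hx
            simpa [Finset.mem_Icc] using this
          have hnm1 : (2*(n:ℤ)+2) ∉ ((UU n)[j - (UU n).length - (WW n).length]'hkl) := fun hx => by have := hb _ hx; omega
          have hnm2 : (-(2*(n:ℤ))-2) ∉ ((UU n)[j - (UU n).length - (WW n).length]'hkl) := fun hx => by have := hb _ hx; omega
          have hnm3 : (2*(n:ℤ)+2) ∉ insert (-(2*(n:ℤ))-2) ((UU n)[j - (UU n).length - (WW n).length]'hkl) := by
            simp only [Finset.mem_insert, not_or]
            exact ⟨by omega, hnm1⟩
          refine ⟨?_, ?_, ?_⟩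
          · intro i hi
            simp only [Finset.mem_insert] at hi
            intro hc
            simp only [Finset.mem_insert] at hc
            rcases hi with rfl | rfl | hi
            · rcases hc with hc | hc | hc
              · omega
              · omega
              · have := hb _ hc; omega
            · rcases hc with hc | hc | hc
              · omega
              · omega
              · have := hb _ hc; omega
            · have hbi := hb _ hi
              rcases hc with hc | hc | hc
              · omega
              · omega
              · exact hadj i hi hc
          · have hj : j = Lucas (2*n+2) + (j - (UU n).length - (WW n).length) := by omega
            rw [SumsTo]
            conv_rhs => rw [hj]
            rw [Finset.sum_insert hnm3, Finset.sum_insert hnm2]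
            have hs : ∑ i ∈ ((UU n)[j - (UU n).length - (WW n).length]'hkl), phi ^ i = ((j - (UU n).length - (WW n).length : ℕ):ℝ) := hsum
            push_cast
            linear_combination hs - hE1
          · intro m hm
            have hnm : n + 1 ≤ m := by
              by_contra hc
              have hle : Lucas (2*m+1) ≤ Lucas (2*n+1) := lucas_mono (by omega) (by omega)
              omega
            intro i hi
            simp only [Finset.mem_insert] at hi
            have hc : (n:ℤ) + 1 ≤ (m:ℤ) := by exact_mod_cast hnm
            simp only [Finset.mem_Icc]
            rcases hi with rfl | rfl | hi
            · omega
            · omega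
            · have := hb _ hi; omega
    · -- W part
      rw [show 2*(n+1)+1 = 2*n+3 from by ring]
      rw [hWdef]
      have hmd : midlen n = Lucas (2*n+2) + 1 - 2 * Lucas (2*n) := rfl
      intro j h
      have h' : j < (WW n).length + midlen n + (WW n).length := by
        have := h
        simp only [List.length_append, List.length_map, List.length_take] at this
        omega
      rcases Nat.lt_or_ge j (WW n).length with hc1 | hc1
      · -- block 1 : complement of W n shifted
        have hj1 : j < (List.map (fun s => insert (2*(n:ℤ)+3) (insert (-(2*(n:ℤ))-1) (insert (-(2*(n:ℤ))-4) ((s.erase (2*(n:ℤ)+1)).erase (-(2*(n:ℤ))-2))))) (WW n)).length := by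
          simp only [List.length_map]; omega
        have he := ga1 _ _ _ h hj1
        rw [List.getElem_map] at he
        rw [he]
        obtain ⟨hadj, hsum, hsub, hm1, hm2⟩ := hW j hc1
        have hb : ∀ x ∈ (WW n)[j], x = 2*(n:ℤ)+1 ∨ x = -(2*(n:ℤ))-2 ∨ (-(2*(n:ℤ))+1 ≤ x ∧ x ≤ 2*(n:ℤ)-1) := by
          intro x hx
          have := hsub hx
          simpa [Finset.mem_insert, Finset.mem_Icc] using this
        have hbe : ∀ x ∈ ((WW n)[j].erase (2*(n:ℤ)+1)).erase (-(2*(n:ℤ))-2), (-(2*(n:ℤ))+1 ≤ x ∧ x ≤ 2*(n:ℤ)-1) := by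
          intro x hx
          simp only [Finset.mem_erase] at hx
          rcases hb x hx.2.2 with h1 | h1 | h1
          · exact absurd h1 hx.2.1
          · exact absurd h1 hx.1
          · exact h1
        have hn4 : (-(2*(n:ℤ))-4) ∉ ((WW n)[j].erase (2*(n:ℤ)+1)).erase (-(2*(n:ℤ))-2) := by
          intro hx; have := hbe _ hx; omega
        have hn1' : (-(2*(n:ℤ))-1) ∉ insert (-(2*(n:ℤ))-4) (((WW n)[j].erase (2*(n:ℤ)+1)).erase (-(2*(n:ℤ))-2)) := by
          simp only [Finset.mem_insert, not_or]
          exact ⟨by omega, fun hx => by have := hbe _ hx; omega⟩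
        have hn3 : (2*(n:ℤ)+3) ∉ insert (-(2*(n:ℤ))-1) (insert (-(2*(n:ℤ))-4) (((WW n)[j].erase (2*(n:ℤ)+1)).erase (-(2*(n:ℤ))-2))) := by
          simp only [Finset.mem_insert, not_or]
          exact ⟨by omega, by omega, fun hx => by have := hbe _ hx; omega⟩
        refine ⟨?_, ?_, ?_, ?_, ?_⟩
        · intro i hi
          simp only [Finset.mem_insert, Finset.mem_erase] at hi
          intro hcon
          simp only [Finset.mem_insert, Finset.mem_erase] at hcon
          rcases hi with rfl | rfl | rfl | ⟨hi1, hi2, hi3⟩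
          · rcases hcon with hcc | hcc | hcc | ⟨hc2, hc3, hc4⟩
            · omega
            · omega
            · omega
            · have := hb _ hc4; omega
          · rcases hcon with hcc | hcc | hcc | ⟨hc2, hc3, hc4⟩
            · omega
            · omega
            · omega
            · have := hb _ hc4; omega
          · rcases hcon with hcc | hcc | hcc | ⟨hc2, hc3, hc4⟩
            · omega
            · omega
            · omega
            · have := hb _ hc4; omega
          · have hbi := hb _ hi3
            rcases hcon with hcc | hcc | hcc | ⟨hc2, hc3, hc4⟩
            · rcases hbi with h1 | h1 | h1 <;> omega
            · rcases hbi with h1 | h1 | h1 <;> omega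
            · rcases hbi with h1 | h1 | h1 <;> omega
            · exact hadj i hi3 hc4
        · rw [SumsTo, Finset.sum_insert hn3, Finset.sum_insert hn1', Finset.sum_insert hn4]
          have hEm' : (-(2*(n:ℤ))-2) ∈ (WW n)[j].erase (2*(n:ℤ)+1) :=
            Finset.mem_erase.2 ⟨by omega, hm2⟩
          have ea := Finset.sum_erase_add ((WW n)[j].erase (2*(n:ℤ)+1)) (fun i => phi ^ i) hEm'
          have eb := Finset.sum_erase_add ((WW n)[j]) (fun i => phi ^ i) hm1
          have e2 : ∑ i ∈ ((WW n)[j].erase (2*(n:ℤ)+1)).erase (-(2*(n:ℤ))-2), phi^i = (∑ i ∈ (WW n)[j], phi^i) - phi^(2*(n:ℤ)+1) - phi^(-(2*(n:ℤ))-2) := by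
            linear_combination ea + eb
          rw [e2]
          have hs : ∑ i ∈ (WW n)[j], phi ^ i = ((Lucas (2*n+1) + 1 + j : ℕ):ℝ) := hsum
          push_cast at hs ⊢
          linear_combination hs + hO - hO1 - z5
        · intro i hi
          simp only [Finset.mem_insert, Finset.mem_erase] at hi
          simp only [Finset.mem_insert, Finset.mem_Icc]
          rcases hi with rfl | rfl | rfl | ⟨hi1, hi2, hi3⟩
          · push_cast; omega
          · push_cast; omega
          · push_cast; omega
          · have := hb _ hi3; push_cast; omega
        · exact Finset.mem_insert.2 (Or.inl (by push_cast; ring))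
        · refine Finset.mem_insert.2 (Or.inr (Finset.mem_insert.2 (Or.inr (Finset.mem_insert.2 (Or.inl (by push_cast; ring))))))
      · rcases Nat.lt_or_ge j ((WW n).length + midlen n) with hc2 | hc2
        · -- block 2 : middle, inserts into UU n entries
          have hk2 : j - (WW n).length < midlen n := by omega
          have hn1 : 1 ≤ n := by
            rcases Nat.eq_zero_or_pos n with rfl | hpos
            · exfalso
              have : midlen 0 = 0 := by decide
              omega
            · exact hpos
          have hzn : (1:ℤ) ≤ (n:ℤ) := by exact_mod_cast hn1
          have hLm : Lucas (2*n+1) = Lucas (2*n) + Lucas (2*(n-1)+1) := by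
            have h'' := lucas_rec3 (2*(n-1))
            rw [show 2*(n-1)+3 = 2*n+1 by omega, show 2*(n-1)+2 = 2*n by omega] at h''
            exact h''
        -- entry equality
          have hgeA : (List.map (fun s => insert (2*(n:ℤ)+3) (insert (-(2*(n:ℤ))-1) (insert (-(2*(n:ℤ))-4) ((s.erase (2*(n:ℤ)+1)).erase (-(2*(n:ℤ))-2))))) (WW n)).length ≤ j := by
            simp only [List.length_map]; omega
          have hltB : j - (WW n).length < (List.take (midlen n) (UU n)).length := by
            rw [htake]; omega
          have he := ga2 _ _ _ h hgeA (by simp only [List.length_map, List.length_take]; omega)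
          rw [List.getElem_map] at he
          simp only [List.length_map] at he
          rw [List.getElem_take] at he
          rw [he]
          have hkU : j - (WW n).length < (UU n).length := by omega
          obtain ⟨hadj, hsum, hsub⟩ := hU (j - (WW n).length) hkU
          have hkb : j - (WW n).length ≤ Lucas (2*(n-1)+1) := by omega
          have hbnd := hsub (n-1) hkb
          have hb : ∀ x ∈ (UU n)[j - (WW n).length], -(2*(n:ℤ))+2 ≤ x ∧ x ≤ 2*(n:ℤ)-2 := by
            intro x hx
            have hx2 := hbnd hx
            simp only [Finset.mem_Icc] at hx2
            have hcast : ((n-1:ℕ):ℤ) = (n:ℤ)-1 := by omega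
            rw [hcast] at hx2
            constructor <;> omega
          have hn4 : (-(2*(n:ℤ))-4) ∉ (UU n)[j - (WW n).length] := fun hx => by have := hb _ hx; omega
          have hn1m : (-(2*(n:ℤ))-1) ∉ insert (-(2*(n:ℤ))-4) ((UU n)[j - (WW n).length]'hkU) := by
            simp only [Finset.mem_insert, not_or]
            exact ⟨by omega, fun hx => by have := hb _ hx; omega⟩
          have hn0 : (2*(n:ℤ)) ∉ insert (-(2*(n:ℤ))-1) (insert (-(2*(n:ℤ))-4) ((UU n)[j - (WW n).length]'hkU)) := by
            simp only [Finset.mem_insert, not_or]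
            exact ⟨by omega, by omega, fun hx => by have := hb _ hx; omega⟩
          have hn3 : (2*(n:ℤ)+3) ∉ insert (2*(n:ℤ)) (insert (-(2*(n:ℤ))-1) (insert (-(2*(n:ℤ))-4) ((UU n)[j - (WW n).length]'hkU))) := by
            simp only [Finset.mem_insert, not_or]
            exact ⟨by omega, by omega, by omega, fun hx => by have := hb _ hx; omega⟩
          refine ⟨?_, ?_, ?_, ?_, ?_⟩
          · intro i hi
            simp only [Finset.mem_insert] at hi
            intro hcon
            simp only [Finset.mem_insert] at hcon
            rcases hi with rfl | rfl | rfl | rfl | hi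
            · rcases hcon with hcc | hcc | hcc | hcc | hcc
              · omega
              · omega
              · omega
              · omega
              · have := hb _ hcc; omega
            · rcases hcon with hcc | hcc | hcc | hcc | hcc
              · omega
              · omega
              · omega
              · omega
              · have := hb _ hcc; omega
            · rcases hcon with hcc | hcc | hcc | hcc | hcc
              · omega
              · omega
              · omega
              · omega
              · have := hb _ hcc; omega
            · rcases hcon with hcc | hcc | hcc | hcc | hcc
              · omega
              · omega
              · omega
              · omega
              · have := hb _ hcc; omega
            · have hbi := hb _ hi
              rcases hcon with hcc | hcc | hcc | hcc | hcc
              · omega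
              · omega
              · omega
              · omega
              · exact hadj i hi hcc
          · rw [SumsTo, Finset.sum_insert hn3, Finset.sum_insert hn0, Finset.sum_insert hn1m, Finset.sum_insert hn4]
            have hs : ∑ i ∈ (UU n)[j - (WW n).length], phi ^ i = ((j - (WW n).length : ℕ):ℝ) := hsum
            have hjval : Lucas (2*n+3) + 1 + j = Lucas (2*n+3) + Lucas (2*n) + (j - (WW n).length) := by omega
            rw [hjval]
            push_cast at hs ⊢
            linear_combination hs - hE - hO1 - z3 - z5
          · intro i hi
            simp only [Finset.mem_insert] at hi
            simp only [Finset.mem_insert, Finset.mem_Icc]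
            rcases hi with rfl | rfl | rfl | rfl | hi
            · push_cast; omega
            · push_cast; omega
            · push_cast; omega
            · push_cast; omega
            · have := hb _ hi; push_cast; omega
          · exact Finset.mem_insert.2 (Or.inl (by push_cast; ring))
          · refine Finset.mem_insert.2 (Or.inr (Finset.mem_insert.2 (Or.inr (Finset.mem_insert.2 (Or.inr (Finset.mem_insert.2 (Or.inl (by push_cast; ring))))))))
        · -- block 3 : complement of W n shifted by L_{2n+3}
          have hgeAB : (List.map (fun s => insert (2*(n:ℤ)+3) (insert (-(2*(n:ℤ))-1) (insert (-(2*(n:ℤ))-4) ((s.erase (2*(n:ℤ)+1)).erase (-(2*(n:ℤ))-2))))) (WW n)).length + (List.map (fun s => insert (2*(n:ℤ)+3) (insert (2*(n:ℤ)) (insert (-(2*(n:ℤ))-1) (insert (-(2*(n:ℤ))-4) s)))) (List.take (midlen n) (UU n))).length ≤ j := by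
            simp only [List.length_map, List.length_take]; omega
          have he := ga3 _ _ _ h hgeAB
          rw [List.getElem_map] at he
          simp only [List.length_map, List.length_take, Nat.min_eq_left hml] at he
          rw [he]
          have hk3 : j - (WW n).length - midlen n < (WW n).length := by omega
          obtain ⟨hadj, hsum, hsub, hm1, hm2⟩ := hW (j - (WW n).length - midlen n) hk3
          have hb : ∀ x ∈ (WW n)[j - (WW n).length - midlen n], x = 2*(n:ℤ)+1 ∨ x = -(2*(n:ℤ))-2 ∨ (-(2*(n:ℤ))+1 ≤ x ∧ x ≤ 2*(n:ℤ)-1) := by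
            intro x hx
            have := hsub hx
            simpa [Finset.mem_insert, Finset.mem_Icc] using this
          have hbe : ∀ x ∈ (WW n)[j - (WW n).length - midlen n].erase (-(2*(n:ℤ))-2), x = 2*(n:ℤ)+1 ∨ (-(2*(n:ℤ))+1 ≤ x ∧ x ≤ 2*(n:ℤ)-1) := by
            intro x hx
            simp only [Finset.mem_erase] at hx
            rcases hb x hx.2 with h1 | h1 | h1
            · exact Or.inl h1
            · exact absurd h1 hx.1
            · exact Or.inr h1
          have hn4 : (-(2*(n:ℤ))-4) ∉ (WW n)[j - (WW n).length - midlen n].erase (-(2*(n:ℤ))-2) := by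
            intro hx; rcases hbe _ hx with h1 | h1 <;> omega
          have hn3 : (2*(n:ℤ)+3) ∉ insert (-(2*(n:ℤ))-4) ((WW n)[j - (WW n).length - midlen n].erase (-(2*(n:ℤ))-2)) := by
            simp only [Finset.mem_insert, not_or]
            exact ⟨by omega, fun hx => by rcases hbe _ hx with h1 | h1 <;> omega⟩
          refine ⟨?_, ?_, ?_, ?_, ?_⟩
          · intro i hi
            simp only [Finset.mem_insert, Finset.mem_erase] at hi
            intro hcon
            simp only [Finset.mem_insert, Finset.mem_erase] at hcon
            rcases hi with rfl | rfl | ⟨hi1, hi2⟩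
            · rcases hcon with hcc | hcc | ⟨hc2, hc3⟩
              · omega
              · omega
              · have := hb _ hc3; omega
            · rcases hcon with hcc | hcc | ⟨hc2, hc3⟩
              · omega
              · omega
              · have := hb _ hc3; omega
            · have hbi := hb _ hi2
              rcases hcon with hcc | hcc | ⟨hc2, hc3⟩
              · rcases hbi with h1 | h1 | h1 <;> omega
              · rcases hbi with h1 | h1 | h1 <;> omega
              · exact hadj i hi2 hc3
          · rw [SumsTo, Finset.sum_insert hn3, Finset.sum_insert hn4]
            have ea := Finset.sum_erase_add ((WW n)[j - (WW n).length - midlen n]) (fun i => phi ^ i) hm2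
            have e2 : ∑ i ∈ (WW n)[j - (WW n).length - midlen n].erase (-(2*(n:ℤ))-2), phi^i = (∑ i ∈ (WW n)[j - (WW n).length - midlen n], phi^i) - phi^(-(2*(n:ℤ))-2) := by
              linear_combination ea
            rw [e2]
            have hs : ∑ i ∈ (WW n)[j - (WW n).length - midlen n], phi ^ i = ((Lucas (2*n+1) + 1 + (j - (WW n).length - midlen n) : ℕ):ℝ) := hsum
            have hjval : Lucas (2*n+3) + 1 + j = Lucas (2*n+3) + (Lucas (2*n+1) + 1 + (j - (WW n).length - midlen n)) := by omega
            rw [hjval]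
            push_cast at hs ⊢
            linear_combination hs - hO1 - z5
          · intro i hi
            simp only [Finset.mem_insert, Finset.mem_erase] at hi
            simp only [Finset.mem_insert, Finset.mem_Icc]
            rcases hi with rfl | rfl | ⟨hi1, hi2⟩
            · push_cast; omega
            · push_cast; omega
            · have := hb _ hi2; push_cast; omega
          · exact Finset.mem_insert.2 (Or.inl (by push_cast; ring))
          · refine Finset.mem_insert.2 (Or.inr (Finset.mem_insert.2 (Or.inl (by push_cast; ring))))

def sig : ℕ → ℕ
  | 1 => 5
  | 2 => 6
  | 3 => 7
  | 4 => 8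
  | 5 => 1
  | 6 => 2
  | 7 => 3
  | 8 => 4
  | _ => 0

lemma tau_sig : ∀ a : ℕ, tau (sig a) = (tau a).map sig
  | 0 => rfl
  | 1 => rfl
  | 2 => rfl
  | 3 => rfl
  | 4 => rfl
  | 5 => rfl
  | 6 => rfl
  | 7 => rfl
  | 8 => rfl
  | n+9 => rfl

lemma tauWord_append (w1 w2 : List ℕ) : tauWord (w1 ++ w2) = tauWord w1 ++ tauWord w2 := by
  simp [tauWord]

lemma tauWord_map_sig (w : List ℕ) : tauWord (w.map sig) = (tauWord w).map sig := by
  induction w with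
  | nil => rfl
  | cons a w ih =>
    simp only [List.map_cons, tauWord, List.flatMap_cons] at *
    rw [tau_sig, ih, List.map_append]

lemma titer_append (n : ℕ) (w1 w2 : List ℕ) :
    tauWord^[n] (w1 ++ w2) = tauWord^[n] w1 ++ tauWord^[n] w2 := by
  induction n generalizing w1 w2 with
  | zero => rfl
  | succ n ih =>
    rw [Function.iterate_succ_apply, Function.iterate_succ_apply, Function.iterate_succ_apply,
      tauWord_append, ih]

lemma titer_map_sig (n : ℕ) (w : List ℕ) :
    tauWord^[n] (w.map sig) = (tauWord^[n] w).map sig := by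
  induction n generalizing w with
  | zero => rfl
  | succ n ih =>
    rw [Function.iterate_succ_apply, Function.iterate_succ_apply, tauWord_map_sig, ih]

def GoodL (a : ℕ) : Prop := 1 ≤ a ∧ a ≤ 8

lemma tau_goodL (a : ℕ) (ha : GoodL a) : ∀ b ∈ tau a, GoodL b := by
  obtain ⟨h1, h2⟩ := ha
  interval_cases a <;> simp [tau, GoodL] <;> omega

lemma tauWord_goodL (w : List ℕ) (h : ∀ x ∈ w, GoodL x) : ∀ x ∈ tauWord w, GoodL x := by
  intro x hx
  simp only [tauWord, List.mem_flatMap] at hx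
  obtain ⟨a, ha, hx⟩ := hx
  exact tau_goodL a (h a ha) x hx

lemma titer_goodL (n : ℕ) (w : List ℕ) (h : ∀ x ∈ w, GoodL x) : ∀ x ∈ tauWord^[n] w, GoodL x := by
  induction n generalizing w with
  | zero => exact h
  | succ n ih =>
    rw [Function.iterate_succ_apply]
    exact ih _ (tauWord_goodL w h)

lemma lam_sig (a : ℕ) (ha : GoodL a) : lam (sig a) = 1 - lam a := by
  obtain ⟨h1, h2⟩ := ha
  interval_cases a <;> rfl

lemma I1 (n : ℕ) : tauWord^[n+2] [1] = tauWord^[n+1] [1] ++ tauWord^[n] [3] ++ tauWord^[n+1] [1] := by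
  induction n with
  | zero => rfl
  | succ n ih =>
    calc tauWord^[n+1+2] [1]
        = tauWord (tauWord^[n+2] [1]) := Function.iterate_succ_apply' tauWord (n+2) [1]
      _ = tauWord (tauWord^[n+1] [1] ++ tauWord^[n] [3] ++ tauWord^[n+1] [1]) := by rw [ih]
      _ = tauWord (tauWord^[n+1] [1]) ++ tauWord (tauWord^[n] [3]) ++ tauWord (tauWord^[n+1] [1]) := by
          rw [tauWord_append, tauWord_append]
      _ = tauWord^[n+1+1] [1] ++ tauWord^[n+1] [3] ++ tauWord^[n+1+1] [1] := by
          rw [← Function.iterate_succ_apply' tauWord (n+1), ← Function.iterate_succ_apply' tauWord n]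

lemma I2 (n : ℕ) : tauWord^[n+2] [3] =
    (tauWord^[n+1] [3]).map sig ++ tauWord^[n+1] [1] ++ (tauWord^[n+1] [3]).map sig := by
  induction n with
  | zero => rfl
  | succ n ih =>
    calc tauWord^[n+1+2] [3]
        = tauWord (tauWord^[n+2] [3]) := Function.iterate_succ_apply' tauWord (n+2) [3]
      _ = tauWord ((tauWord^[n+1] [3]).map sig ++ tauWord^[n+1] [1] ++ (tauWord^[n+1] [3]).map sig) := by rw [ih]
      _ = tauWord ((tauWord^[n+1] [3]).map sig) ++ tauWord (tauWord^[n+1] [1]) ++ tauWord ((tauWord^[n+1] [3]).map sig) := by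
          rw [tauWord_append, tauWord_append]
      _ = (tauWord^[n+1+1] [3]).map sig ++ tauWord^[n+1+1] [1] ++ (tauWord^[n+1+1] [3]).map sig := by
          rw [tauWord_map_sig, ← Function.iterate_succ_apply' tauWord (n+1) [3], ← Function.iterate_succ_apply' tauWord (n+1) [1]]

lemma Isplit (n : ℕ) : tauWord^[n+1] [1] = tauWord^[n] [1] ++ tauWord^[n] [2] := by
  rw [Function.iterate_succ_apply]
  show tauWord^[n] ([1] ++ [2]) = _
  rw [titer_append]


lemma lens : ∀ n : ℕ, ((tauWord^[n+1] [1]).length = Lucas (2*n+1) + 1) ∧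
    ((tauWord^[n] [3]).length = Lucas (2*n) - 1) ∧
    ((tauWord^[n+1] [3]).length = Lucas (2*n+2) - 1)
  | 0 => by refine ⟨rfl, rfl, rfl⟩
  | n+1 => by
    obtain ⟨a, b, c⟩ := lens n
    have r2 := lucas_rec (2*n)
    have r3 := lucas_rec3 (2*n)
    have r4 := lucas_rec4 (2*n)
    have q0 := lucas_pos (2*n)
    have q1 := lucas_pos (2*n+1)
    have q2 := lucas_pos (2*n+2)
    refine ⟨?_, ?_, ?_⟩
    · rw [show 2*(n+1)+1 = 2*n+3 by ring, I1 n]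
      simp only [List.length_append, a, b]
      omega
    · rw [show 2*(n+1) = 2*n+2 by ring]
      exact c
    · rw [show 2*(n+1)+2 = 2*n+4 by ring, I2 n]
      simp only [List.length_append, List.length_map, a, c]
      omega

lemma midlen_succ (m : ℕ) : midlen (m+1) = Lucas (2*m+1) + 1 := by
  have r2 := lucas_rec (2*m)
  have r3 := lucas_rec3 (2*m)
  have r4 := lucas_rec4 (2*m)
  have q0 := lucas_pos (2*m)
  have q1 := lucas_pos (2*m+1)
  simp only [midlen]
  rw [show 2*(m+1)+2 = 2*m+4 by ring, show 2*(m+1) = 2*m+2 by ring]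
  omega

lemma take_tau1 (m : ℕ) : (tauWord^[m+2] [1]).take (midlen (m+1)) = tauWord^[m+1] [1] := by
  have hl : (tauWord^[m+1] [1]).length = midlen (m+1) := by
    rw [(lens m).1, midlen_succ]
  rw [Isplit (m+1)]
  exact List.take_left' hl

def pc (s : Finset ℤ) : ℕ := s.card % 2

lemma good3 (n : ℕ) : ∀ x ∈ tauWord^[n] [3], GoodL x := by
  apply titer_goodL
  intro x hx
  simp only [List.mem_singleton] at hx
  subst hx
  exact ⟨by omega, by omega⟩

lemma parity : ∀ n : ℕ, ((UU n).map pc = (tauWord^[n+1] [1]).map lam) ∧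
    ((WW n).map pc = (tauWord^[n] [3]).map lam) := by
  intro n
  induction n with
  | zero => exact ⟨by decide, by decide⟩
  | succ n ih =>
    obtain ⟨ih1, ih2⟩ := ih
    obtain ⟨lU, lW, hU, hW⟩ := master n
    constructor
    · -- U part
      have hUdef : UU (n+1) = UU n ++ WW n ++ (UU n).map (fun s => insert (2*(n:ℤ)+2) (insert (-(2*(n:ℤ))-2) s)) := rfl
      rw [hUdef, List.map_append, List.map_append]
      have h3 : ((UU n).map (fun s => insert (2*(n:ℤ)+2) (insert (-(2*(n:ℤ))-2) s))).map pc = (UU n).map pc := by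
        rw [List.map_map]
        apply List.ext_getElem (by simp)
        intro i h1 h2
        have hiU : i < (UU n).length := by simpa using h2
        simp only [List.getElem_map, Function.comp_apply]
        obtain ⟨hadj, hsum, hsub⟩ := hU i hiU
        have hbnd := hsub n (by rw [lU] at hiU; omega)
        have hb : ∀ x ∈ (UU n)[i], -(2*(n:ℤ)) ≤ x ∧ x ≤ 2*(n:ℤ) := fun x hx => by
          have := hbnd hx; simpa [Finset.mem_Icc] using this
        have hnb : (-(2*(n:ℤ))-2) ∉ ((UU n)[i]'hiU) := fun hx => by have := hb _ hx; omega
        have hna : (2*(n:ℤ)+2) ∉ insert (-(2*(n:ℤ))-2) ((UU n)[i]'hiU) := by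
          simp only [Finset.mem_insert, not_or]
          exact ⟨by omega, fun hx => by have := hb _ hx; omega⟩
        simp only [pc, Finset.card_insert_of_notMem hna, Finset.card_insert_of_notMem hnb]
        omega
      rw [h3, ih1, ih2, I1 n, List.map_append, List.map_append]
    · -- W part
      cases n with
      | zero => exact (by decide : (WW 1).map pc = (tauWord^[1] [3]).map lam)
      | succ m =>
        have hWdef : WW (m+1+1) = (WW (m+1)).map (fun s => insert (2*((m+1:ℕ):ℤ)+3) (insert (-(2*((m+1:ℕ):ℤ))-1) (insert (-(2*((m+1:ℕ):ℤ))-4) ((s.erase (2*((m+1:ℕ):ℤ)+1)).erase (-(2*((m+1:ℕ):ℤ))-2)))))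
            ++ ((UU (m+1)).take (midlen (m+1))).map (fun s => insert (2*((m+1:ℕ):ℤ)+3) (insert (2*((m+1:ℕ):ℤ)) (insert (-(2*((m+1:ℕ):ℤ))-1) (insert (-(2*((m+1:ℕ):ℤ))-4) s))))
            ++ (WW (m+1)).map (fun s => insert (2*((m+1:ℕ):ℤ)+3) (insert (-(2*((m+1:ℕ):ℤ))-4) (s.erase (-(2*((m+1:ℕ):ℤ))-2)))) := rfl
        rw [hWdef, List.map_append, List.map_append]
        have hg1 : ((WW (m+1)).map (fun s => insert (2*((m+1:ℕ):ℤ)+3) (insert (-(2*((m+1:ℕ):ℤ))-1) (insert (-(2*((m+1:ℕ):ℤ))-4) ((s.erase (2*((m+1:ℕ):ℤ)+1)).erase (-(2*((m+1:ℕ):ℤ))-2)))))).map pc = ((WW (m+1)).map pc).map (fun v => 1 - v) := by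
          rw [List.map_map, List.map_map]
          apply List.ext_getElem (by simp)
          intro i h1 h2
          have hiW : i < (WW (m+1)).length := by simpa using h1
          simp only [List.getElem_map, Function.comp_apply]
          obtain ⟨hadj, hsum, hsub, hm1, hm2⟩ := hW i hiW
          have hb : ∀ x ∈ (WW (m+1))[i], x = 2*((m+1:ℕ):ℤ)+1 ∨ x = -(2*((m+1:ℕ):ℤ))-2 ∨ (-(2*((m+1:ℕ):ℤ))+1 ≤ x ∧ x ≤ 2*((m+1:ℕ):ℤ)-1) := fun x hx => by
            have := hsub hx; simpa [Finset.mem_insert, Finset.mem_Icc] using this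
          have hbe : ∀ x ∈ (((WW (m+1))[i]'hiW).erase (2*((m+1:ℕ):ℤ)+1)).erase (-(2*((m+1:ℕ):ℤ))-2), (-(2*((m+1:ℕ):ℤ))+1 ≤ x ∧ x ≤ 2*((m+1:ℕ):ℤ)-1) := by
            intro x hx
            simp only [Finset.mem_erase] at hx
            rcases hb x hx.2.2 with h | h | h
            · exact absurd h hx.2.1
            · exact absurd h hx.1
            · exact h
          have hn4 : (-(2*((m+1:ℕ):ℤ))-4) ∉ (((WW (m+1))[i]'hiW).erase (2*((m+1:ℕ):ℤ)+1)).erase (-(2*((m+1:ℕ):ℤ))-2) := fun hx => by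
            have := hbe _ hx; omega
          have hn1m : (-(2*((m+1:ℕ):ℤ))-1) ∉ insert (-(2*((m+1:ℕ):ℤ))-4) ((((WW (m+1))[i]'hiW).erase (2*((m+1:ℕ):ℤ)+1)).erase (-(2*((m+1:ℕ):ℤ))-2)) := by
            simp only [Finset.mem_insert, not_or]
            exact ⟨by omega, fun hx => by have := hbe _ hx; omega⟩
          have hn3 : (2*((m+1:ℕ):ℤ)+3) ∉ insert (-(2*((m+1:ℕ):ℤ))-1) (insert (-(2*((m+1:ℕ):ℤ))-4) ((((WW (m+1))[i]'hiW).erase (2*((m+1:ℕ):ℤ)+1)).erase (-(2*((m+1:ℕ):ℤ))-2))) := by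
            simp only [Finset.mem_insert, not_or]
            exact ⟨by omega, by omega, fun hx => by have := hbe _ hx; omega⟩
          have hE2 : (-(2*((m+1:ℕ):ℤ))-2) ∈ ((WW (m+1))[i]'hiW).erase (2*((m+1:ℕ):ℤ)+1) :=
            Finset.mem_erase.2 ⟨by omega, hm2⟩
          have c2 : ((((WW (m+1))[i]'hiW).erase (2*((m+1:ℕ):ℤ)+1)).erase (-(2*((m+1:ℕ):ℤ))-2)).card = ((WW (m+1))[i]'hiW).card - 2 := by
            rw [Finset.card_erase_of_mem hE2, Finset.card_erase_of_mem hm1]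
            omega
          have hge2 : 2 ≤ ((WW (m+1))[i]'hiW).card := by
            have h1c : 0 < (((WW (m+1))[i]'hiW).erase (2*((m+1:ℕ):ℤ)+1)).card := Finset.card_pos.2 ⟨_, hE2⟩
            have h2c := Finset.card_erase_of_mem hm1
            omega
          simp only [pc, Finset.card_insert_of_notMem hn3, Finset.card_insert_of_notMem hn1m,
            Finset.card_insert_of_notMem hn4, c2]
          omega
        have hg3 : ((WW (m+1)).map (fun s => insert (2*((m+1:ℕ):ℤ)+3) (insert (-(2*((m+1:ℕ):ℤ))-4) (s.erase (-(2*((m+1:ℕ):ℤ))-2))))).map pc = ((WW (m+1)).map pc).map (fun v => 1 - v) := by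
          rw [List.map_map, List.map_map]
          apply List.ext_getElem (by simp)
          intro i h1 h2
          have hiW : i < (WW (m+1)).length := by simpa using h1
          simp only [List.getElem_map, Function.comp_apply]
          obtain ⟨hadj, hsum, hsub, hm1, hm2⟩ := hW i hiW
          have hb : ∀ x ∈ (WW (m+1))[i], x = 2*((m+1:ℕ):ℤ)+1 ∨ x = -(2*((m+1:ℕ):ℤ))-2 ∨ (-(2*((m+1:ℕ):ℤ))+1 ≤ x ∧ x ≤ 2*((m+1:ℕ):ℤ)-1) := fun x hx => by
            have := hsub hx; simpa [Finset.mem_insert, Finset.mem_Icc] using this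
          have hbe : ∀ x ∈ ((WW (m+1))[i]'hiW).erase (-(2*((m+1:ℕ):ℤ))-2), x = 2*((m+1:ℕ):ℤ)+1 ∨ (-(2*((m+1:ℕ):ℤ))+1 ≤ x ∧ x ≤ 2*((m+1:ℕ):ℤ)-1) := by
            intro x hx
            simp only [Finset.mem_erase] at hx
            rcases hb x hx.2 with h | h | h
            · exact Or.inl h
            · exact absurd h hx.1
            · exact Or.inr h
          have hn4 : (-(2*((m+1:ℕ):ℤ))-4) ∉ ((WW (m+1))[i]'hiW).erase (-(2*((m+1:ℕ):ℤ))-2) := fun hx => by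
            rcases hbe _ hx with h | h <;> omega
          have hn3 : (2*((m+1:ℕ):ℤ)+3) ∉ insert (-(2*((m+1:ℕ):ℤ))-4) (((WW (m+1))[i]'hiW).erase (-(2*((m+1:ℕ):ℤ))-2)) := by
            simp only [Finset.mem_insert, not_or]
            exact ⟨by omega, fun hx => by rcases hbe _ hx with h | h <;> omega⟩
          have c2 : (((WW (m+1))[i]'hiW).erase (-(2*((m+1:ℕ):ℤ))-2)).card = ((WW (m+1))[i]'hiW).card - 1 :=
            Finset.card_erase_of_mem hm2
          have hge1 : 1 ≤ ((WW (m+1))[i]'hiW).card := Finset.card_pos.2 ⟨_, hm2⟩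
          simp only [pc, Finset.card_insert_of_notMem hn3, Finset.card_insert_of_notMem hn4, c2]
          omega
        have hg2 : (((UU (m+1)).take (midlen (m+1))).map (fun s => insert (2*((m+1:ℕ):ℤ)+3) (insert (2*((m+1:ℕ):ℤ)) (insert (-(2*((m+1:ℕ):ℤ))-1) (insert (-(2*((m+1:ℕ):ℤ))-4) s))))).map pc = ((UU (m+1)).map pc).take (midlen (m+1)) := by
          rw [List.map_map, ← List.map_take]
          apply List.ext_getElem (by simp)
          intro i h1 h2
          have hit : i < ((UU (m+1)).take (midlen (m+1))).length := by simpa using h1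
          have hiU : i < (UU (m+1)).length := by
            simp only [List.length_take] at hit; omega
          simp only [List.getElem_map, Function.comp_apply, List.getElem_take]
          obtain ⟨hadj, hsum, hsub⟩ := hU i hiU
          have hile : i ≤ Lucas (2*m+1) := by
            have hmd := midlen_succ m
            simp only [List.length_take] at hit
            omega
          have hbnd := hsub m hile
          have hb : ∀ x ∈ (UU (m+1))[i], -(2*(m:ℤ)) ≤ x ∧ x ≤ 2*(m:ℤ) := fun x hx => by
            have := hbnd hx; simpa [Finset.mem_Icc] using this
          have hn4 : (-(2*((m+1:ℕ):ℤ))-4) ∉ ((UU (m+1))[i]'hiU) := fun hx => by have := hb _ hx; omega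
          have hn1m : (-(2*((m+1:ℕ):ℤ))-1) ∉ insert (-(2*((m+1:ℕ):ℤ))-4) ((UU (m+1))[i]'hiU) := by
            simp only [Finset.mem_insert, not_or]
            exact ⟨by omega, fun hx => by have := hb _ hx; omega⟩
          have hn0 : (2*((m+1:ℕ):ℤ)) ∉ insert (-(2*((m+1:ℕ):ℤ))-1) (insert (-(2*((m+1:ℕ):ℤ))-4) ((UU (m+1))[i]'hiU)) := by
            simp only [Finset.mem_insert, not_or]
            exact ⟨by omega, by omega, fun hx => by have := hb _ hx; omega⟩
          have hn3 : (2*((m+1:ℕ):ℤ)+3) ∉ insert (2*((m+1:ℕ):ℤ)) (insert (-(2*((m+1:ℕ):ℤ))-1) (insert (-(2*((m+1:ℕ):ℤ))-4) ((UU (m+1))[i]'hiU))) := by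
            simp only [Finset.mem_insert, not_or]
            exact ⟨by omega, by omega, by omega, fun hx => by have := hb _ hx; omega⟩
          simp only [pc, Finset.card_insert_of_notMem hn3, Finset.card_insert_of_notMem hn0,
            Finset.card_insert_of_notMem hn1m, Finset.card_insert_of_notMem hn4]
          omega
        have hXgood : ∀ x ∈ tauWord^[m+1] [3], GoodL x := good3 (m+1)
        have hsl : ((tauWord^[m+1] [3]).map sig).map lam = ((tauWord^[m+1] [3]).map lam).map (fun v => 1 - v) := by
          rw [List.map_map, List.map_map]
          exact List.map_congr_left (fun a ha => by
            simp only [Function.comp_apply]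
            exact lam_sig a (hXgood a ha))
        rw [hg1, hg2, hg3, ih1, ih2, ← List.map_take, take_tau1 m, I2 m,
          List.map_append, List.map_append, hsl]

lemma T_pc (T : ℕ → ℕ) (hT : ∀ (N : ℕ) (d : ℤ → ℕ), IsBasePhi N d → T N = digitSum d % 2)
    (N : ℕ) (s : Finset ℤ) (hadj : NoAdj s) (hsum : SumsTo s N) : T N = pc s := by
  set d : ℤ → ℕ := fun i => if i ∈ s then 1 else 0 with hd
  have hzero : ∀ b ∉ s, d b = 0 := fun b hb => by simp [hd, hb]
  have hbp : IsBasePhi N d := by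
    refine ⟨?_, ?_, ?_, ?_⟩
    · apply Set.Finite.subset s.finite_toSet
      intro i hi
      simp only [Set.mem_setOf_eq, hd] at hi
      simp only [Finset.mem_coe]
      by_contra hc
      exact hi (if_neg hc)
    · intro i; simp only [hd]; split <;> omega
    · intro i
      by_cases h1 : i ∈ s
      · have := hadj i h1
        simp [hd, this]
      · simp [hd, h1]
    · rw [tsum_eq_sum (s := s) (fun b hb => by simp [hzero b hb])]
      rw [show ∑ i ∈ s, ((d i : ℝ) * phi ^ i) = ∑ i ∈ s, phi ^ i from
        Finset.sum_congr rfl (fun i hi => by simp [hd, hi])]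
      exact hsum
  have hds : digitSum d = s.card := by
    rw [digitSum, tsum_eq_sum (s := s) (fun b hb => hzero b hb)]
    rw [Finset.card_eq_sum_ones]
    exact Finset.sum_congr rfl (fun i hi => by simp [hd, hi])
  rw [hT N d hbp, hds, pc]

lemma Tword_pc (T : ℕ → ℕ) (hT : ∀ (N : ℕ) (d : ℤ → ℕ), IsBasePhi N d → T N = digitSum d % 2)
    (a b : ℕ) (l : List (Finset ℤ)) (hlen : l.length = b + 1 - a)
    (hexp : ∀ j, (hj : j < l.length) → NoAdj l[j] ∧ SumsTo l[j] (a + j)) :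
    Tword T a b = l.map pc := by
  apply List.ext_getElem
  · simp [Tword, hlen]
  · intro i h1 h2
    have hi : i < l.length := by simpa using h2
    rw [show (Tword T a b)[i]'h1 = T (a + i) from by simp [Tword]]
    rw [List.getElem_map]
    exact T_pc T hT (a+i) _ (hexp i hi).1 (hexp i hi).2

/-- For `n ≥ 1`, the word `T(L (2n+1) + 1) … T(L (2n+2) - 1)` (i.e. `T(Λ_{2n+1})`)
is the letter-by-letter image under `λ` of `τ^n(3)`. -/
theorem Tword_odd_eq_tau (T : ℕ → ℕ)
    (hT : ∀ (N : ℕ) (d : ℤ → ℕ), IsBasePhi N d → T N = digitSum d % 2)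
    (n : ℕ) (hn : 1 ≤ n) :
    Tword T (Lucas (2 * n + 1) + 1) (Lucas (2 * n + 2) - 1) = (tauWord^[n] [3]).map lam := by
  obtain ⟨lU, lW, hU, hW⟩ := master n
  have r2 := lucas_rec (2*n)
  have q0 := lucas_pos (2*n)
  have q1 := lucas_pos (2*n+1)
  have h1 : Tword T (Lucas (2*n+1)+1) (Lucas (2*n+2)-1) = (WW n).map pc := by
    apply Tword_pc T hT
    · rw [lW]; omega
    · intro j hj
      obtain ⟨hadj, hsum, _⟩ := hW j hj
      exact ⟨hadj, hsum⟩
  rw [h1, (parity n).2]
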